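/- Let ψ : M² → L⁴ be a spacelike immersion through the lightcone with η non-degenerate. Then the Gauss curvature of the third fundamental form III_η = ⟨A_η²·, ·⟩ equals K/d, where K is the Gauss curvature of the induced metric and d = det(A_η) is the Gauss–Kronecker curvature with respect to η. -/

import Mathlib

/-- The Lorentz–Minkowski inner product on `ℝ⁴`, signature `(-,+,+,+)`. -/
def mink (u v : Fin 4 → ℝ) : ℝ := -(u 0 * v 0) + u 1 * v 1 + u 2 * v 2 + u 3 * v 3

/-- Partial derivative in the first chart direction. -/
noncomputable def pd1 (f : ℝ × ℝ → ℝ) (p : ℝ × ℝ) : ℝ := fderiv ℝ f p (1, 0)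

/-- Partial derivative in the second chart direction. -/
noncomputable def pd2 (f : ℝ × ℝ → ℝ) (p : ℝ × ℝ) : ℝ := fderiv ℝ f p (0, 1)

/-- The Gauss curvature of the metric `E dx² + 2F dx dy + G dy²` via the Brioschi formula. -/
noncomputable def brioschi (E F G : ℝ × ℝ → ℝ) (p : ℝ × ℝ) : ℝ :=
  (Matrix.det !![-(1 / 2) * pd2 (pd2 E) p + pd1 (pd2 F) p - (1 / 2) * pd1 (pd1 G) p,
      (1 / 2) * pd1 E p, pd1 F p - (1 / 2) * pd2 E p;
      pd2 F p - (1 / 2) * pd1 G p, E p, F p;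
      (1 / 2) * pd2 G p, F p, G p] -
    Matrix.det !![0, (1 / 2) * pd2 E p, (1 / 2) * pd1 G p;
      (1 / 2) * pd2 E p, E p, F p;
      (1 / 2) * pd1 G p, F p, G p]) / (E p * G p - F p ^ 2) ^ 2

open Matrix

lemma mk_comm (u v : Fin 4 → ℝ) : mink u v = mink v u := by simp [mink]; ring

/-- scalar component of a vector-valued map -/
def comp4 (ψ : ℝ × ℝ → Fin 4 → ℝ) (k : Fin 4) : ℝ × ℝ → ℝ := fun q => ψ q k

/-- directional derivative as a function -/
noncomputable def pdd (v : ℝ × ℝ) (f : ℝ × ℝ → ℝ) : ℝ × ℝ → ℝ := fun q => fderiv ℝ f q v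

def mkq (f g : Fin 4 → (ℝ × ℝ → ℝ)) : ℝ × ℝ → ℝ :=
  fun q => mink (fun k => f k q) (fun k => g k q)

lemma contDiff_comp4 {ψ : ℝ × ℝ → Fin 4 → ℝ} (hψ : ContDiff ℝ (⊤ : ℕ∞) ψ) (k : Fin 4) :
    ContDiff ℝ (⊤ : ℕ∞) (comp4 ψ k) := (contDiff_pi.mp hψ) k

lemma contDiff_pdd {f : ℝ × ℝ → ℝ} (hf : ContDiff ℝ (⊤ : ℕ∞) f) (v : ℝ × ℝ) :
    ContDiff ℝ (⊤ : ℕ∞) (pdd v f) :=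
  (hf.fderiv_right ((by simp))).clm_apply contDiff_const

lemma fderiv_comp4 {ψ : ℝ × ℝ → Fin 4 → ℝ} (hψ : ContDiff ℝ (⊤ : ℕ∞) ψ) (q v) (k : Fin 4) :
    (fderiv ℝ ψ q v) k = pdd v (comp4 ψ k) q := by
  have h : ∀ i : Fin 4, DifferentiableAt ℝ (fun x => ψ x i) q := fun i =>
    ((contDiff_pi.mp hψ) i).differentiable (by simp) q
  rw [fderiv_pi h]
  rfl

lemma fderiv_comp4' {ψ : ℝ × ℝ → Fin 4 → ℝ} (hψ : ContDiff ℝ (⊤ : ℕ∞) ψ) (q v) :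
    fderiv ℝ ψ q v = fun k => pdd v (comp4 ψ k) q :=
  funext fun k => fderiv_comp4 hψ q v k

lemma pdd_comm {f : ℝ × ℝ → ℝ} (hf : ContDiff ℝ (⊤ : ℕ∞) f) (v w : ℝ × ℝ) :
    pdd v (pdd w f) = pdd w (pdd v f) := by
  funext p
  have hd : DifferentiableAt ℝ (fderiv ℝ f) p :=
    (hf.fderiv_right (m := 1) ((WithTop.coe_le_coe.mpr le_top))).differentiable one_ne_zero p
  have h1 : pdd v (pdd w f) p = fderiv ℝ (fderiv ℝ f) p v w := by
    show fderiv ℝ (fun q => fderiv ℝ f q w) p v = _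
    rw [fderiv_clm_apply hd (differentiableAt_const w)]
    simp
  have h2 : pdd w (pdd v f) p = fderiv ℝ (fderiv ℝ f) p w v := by
    show fderiv ℝ (fun q => fderiv ℝ f q v) p w = _
    rw [fderiv_clm_apply hd (differentiableAt_const v)]
    simp
  rw [h1, h2]
  exact (hf.contDiffAt.isSymmSndFDerivAt (by rw [minSmoothness_of_isRCLikeNormedField]; exact WithTop.coe_le_coe.mpr le_top)) v w

lemma contDiff_mkq {f g : Fin 4 → (ℝ × ℝ → ℝ)} (hf : ∀ k, ContDiff ℝ (⊤ : ℕ∞) (f k))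
    (hg : ∀ k, ContDiff ℝ (⊤ : ℕ∞) (g k)) : ContDiff ℝ (⊤ : ℕ∞) (mkq f g) := by
  show ContDiff ℝ (⊤ : ℕ∞) (fun q => -(f 0 q * g 0 q) + f 1 q * g 1 q + f 2 q * g 2 q + f 3 q * g 3 q)
  exact ((((hf 0).mul (hg 0)).neg.add ((hf 1).mul (hg 1))).add ((hf 2).mul (hg 2))).add
    ((hf 3).mul (hg 3))

lemma pd_mkq {f g : Fin 4 → (ℝ × ℝ → ℝ)} (hf : ∀ k, ContDiff ℝ (⊤ : ℕ∞) (f k))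
    (hg : ∀ k, ContDiff ℝ (⊤ : ℕ∞) (g k)) (v : ℝ × ℝ) (p : ℝ × ℝ) :
    fderiv ℝ (mkq f g) p v =
      mink (fun k => pdd v (f k) p) (fun k => g k p) +
      mink (fun k => f k p) (fun k => pdd v (g k) p) := by
  have Hf : ∀ k, HasFDerivAt (f k) (fderiv ℝ (f k) p) p := fun k =>
    ((hf k).differentiable (by simp) p).hasFDerivAt
  have Hg : ∀ k, HasFDerivAt (g k) (fderiv ℝ (g k) p) p := fun k =>
    ((hg k).differentiable (by simp) p).hasFDerivAt
  have H := ((((Hf 0).mul (Hg 0)).neg.add ((Hf 1).mul (Hg 1))).add ((Hf 2).mul (Hg 2))).add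
      ((Hf 3).mul (Hg 3))
  have H' : HasFDerivAt (mkq f g) _ p := H
  rw [H'.fderiv]
  simp [mink, pdd]
  ring

/-- function-level version -/
lemma pdd_mkq {f g : Fin 4 → (ℝ × ℝ → ℝ)} (hf : ∀ k, ContDiff ℝ (⊤ : ℕ∞) (f k))
    (hg : ∀ k, ContDiff ℝ (⊤ : ℕ∞) (g k)) (v : ℝ × ℝ) :
    pdd v (mkq f g) = fun p => mkq (fun k => pdd v (f k)) g p + mkq f (fun k => pdd v (g k)) p :=
  funext fun p => pd_mkq hf hg v p

lemma pd_const_eq {f : ℝ × ℝ → ℝ} {c : ℝ} (h : ∀ q, f q = c) (v : ℝ × ℝ) :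
    pdd v f = fun _ => 0 := by
  rw [show f = fun _ => c from funext h]
  funext p
  show fderiv ℝ (fun _ => c) p v = 0
  simp

lemma mk_lin (X Y P N Z : Fin 4 → ℝ) (α β γ δ : ℝ) (u : Fin 4 → ℝ)
    (hu : ∀ k, u k = α * X k + β * Y k + γ * P k + δ * N k) :
    mink u Z = α * mink X Z + β * mink Y Z + γ * mink P Z + δ * mink N Z := by
  simp only [mink, hu 0, hu 1, hu 2, hu 3]; ring
lemma decomp (X Y P N : Fin 4 → ℝ) (E F G : ℝ)
    (hXX : mink X X = E) (hXY : mink X Y = F) (hYY : mink Y Y = G)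
    (hXP : mink X P = 0) (hYP : mink Y P = 0) (hXN : mink X N = 0) (hYN : mink Y N = 0)
    (hPP : mink P P = 0) (hNN : mink N N = 0) (hPN : mink P N = 1)
    (hEG : E * G - F ^ 2 ≠ 0) (u : Fin 4 → ℝ) :
    ∃ α β, ∀ k, u k = α * X k + β * Y k + (mink u N) * P k + (mink u P) * N k := by
  classical
  set C : Fin 4 → (Fin 4 → ℝ) := ![X, Y, P, N] with hC
  set M : Matrix (Fin 4) (Fin 4) ℝ := Matrix.of (fun i j => C j i) with hM
  set J : Matrix (Fin 4) (Fin 4) ℝ := Matrix.diagonal ![(-1 : ℝ), 1, 1, 1] with hJ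
  have hGram : ∀ i j, (Mᵀ * (J * M)) i j = mink (C i) (C j) := by
    intro i j
    rw [Matrix.mul_apply]
    simp only [hM, hJ, Matrix.diagonal_mul, Matrix.transpose_apply, Matrix.of_apply,
      Fin.sum_univ_four]
    simp [mink]
    try ring
  have hYX : mink Y X = F := by rw [mk_comm]; exact hXY
  have hPX : mink P X = 0 := by rw [mk_comm]; exact hXP
  have hPY : mink P Y = 0 := by rw [mk_comm]; exact hYP
  have hNX : mink N X = 0 := by rw [mk_comm]; exact hXN
  have hNY : mink N Y = 0 := by rw [mk_comm]; exact hYN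
  have hNP : mink N P = 1 := by rw [mk_comm]; exact hPN
  have hdetG : (Mᵀ * (J * M)).det = -(E * G - F ^ 2) := by
    have hGmat : Mᵀ * (J * M) =
        !![mink X X, mink X Y, mink X P, mink X N;
           mink Y X, mink Y Y, mink Y P, mink Y N;
           mink P X, mink P Y, mink P P, mink P N;
           mink N X, mink N Y, mink N P, mink N N] := by
      ext i j
      rw [hGram i j]
      fin_cases i <;> fin_cases j <;> rfl
    rw [hGmat, hXX, hXY, hYY, hXP, hYP, hXN, hYN, hPP, hNN, hPN, hYX, hPX, hPY, hNX, hNY, hNP]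
    rw [Matrix.det_succ_row_zero]
    norm_num [Fin.sum_univ_succ, Matrix.det_fin_three, Fin.succAbove]
    simp
    try ring
  have hdetM : M.det ≠ 0 := by
    intro h0
    rw [← Matrix.mul_assoc, Matrix.det_mul, Matrix.det_mul, h0, mul_zero] at hdetG
    exact hEG (by linarith)
  obtain ⟨c, hc⟩ : ∃ c : Fin 4 → ℝ, M.mulVec c = u :=
    ⟨M⁻¹.mulVec u, by
      rw [Matrix.mulVec_mulVec, Matrix.mul_nonsing_inv M (isUnit_iff_ne_zero.mpr hdetM),
        Matrix.one_mulVec]⟩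
  have hu : ∀ k, u k = c 0 * X k + c 1 * Y k + c 2 * P k + c 3 * N k := by
    intro k
    rw [← hc]
    simp [Matrix.mulVec, dotProduct, Fin.sum_univ_four, hM, hC]
    ring
  have huN : mink u N = c 2 := by
    simp only [mink, hu 0, hu 1, hu 2, hu 3]
    simp only [mink] at hXN hYN hPN hNN
    linear_combination c 0 * hXN + c 1 * hYN + c 2 * hPN + c 3 * hNN
  have huP : mink u P = c 3 := by
    simp only [mink, hu 0, hu 1, hu 2, hu 3]
    simp only [mink] at hXP hYP hPP hPN
    linear_combination c 0 * hXP + c 1 * hYP + c 2 * hPP + c 3 * hPN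
  exact ⟨c 0, c 1, fun k => by rw [huN, huP]; exact hu k⟩
lemma lin2 (f : ℝ × ℝ →ₗ[ℝ] ℝ × ℝ) (x y : ℝ) :
    f (x, y) = x • f (1, 0) + y • f (0, 1) := by
  have : ((x, y) : ℝ × ℝ) = x • ((1, 0) : ℝ × ℝ) + y • ((0, 1) : ℝ × ℝ) := by
    simp [Prod.ext_iff]
  rw [this, map_add, _root_.map_smul, _root_.map_smul]

lemma det2 (f : ℝ × ℝ →ₗ[ℝ] ℝ × ℝ) :
    LinearMap.det f = (f (1, 0)).1 * (f (0, 1)).2 - (f (0, 1)).1 * (f (1, 0)).2 := by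
  rw [← LinearMap.det_toMatrix (Module.Basis.finTwoProd ℝ) f, Matrix.det_fin_two]
  simp [LinearMap.toMatrix_apply, Module.Basis.finTwoProd]

-- clm version of lin2
lemma clm2 (f : ℝ × ℝ →L[ℝ] (Fin 4 → ℝ)) (x y : ℝ) :
    f (x, y) = x • f (1, 0) + y • f (0, 1) := by
  have : ((x, y) : ℝ × ℝ) = x • ((1, 0) : ℝ × ℝ) + y • ((0, 1) : ℝ × ℝ) := by
    simp [Prod.ext_iff]
  rw [this, map_add, _root_.map_smul, _root_.map_smul]

/- families of derivative components -/
noncomputable def famx (ψ : ℝ × ℝ → Fin 4 → ℝ) : Fin 4 → ℝ × ℝ → ℝ :=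
  fun k => pdd (1, 0) (comp4 ψ k)
noncomputable def famy (ψ : ℝ × ℝ → Fin 4 → ℝ) : Fin 4 → ℝ × ℝ → ℝ :=
  fun k => pdd (0, 1) (comp4 ψ k)
noncomputable def famxx (ψ : ℝ × ℝ → Fin 4 → ℝ) : Fin 4 → ℝ × ℝ → ℝ :=
  fun k => pdd (1, 0) (famx ψ k)
noncomputable def famxy (ψ : ℝ × ℝ → Fin 4 → ℝ) : Fin 4 → ℝ × ℝ → ℝ :=
  fun k => pdd (0, 1) (famx ψ k)
noncomputable def famyy (ψ : ℝ × ℝ → Fin 4 → ℝ) : Fin 4 → ℝ × ℝ → ℝ :=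
  fun k => pdd (0, 1) (famy ψ k)
noncomputable def famq1 (ψ : ℝ × ℝ → Fin 4 → ℝ) : Fin 4 → ℝ × ℝ → ℝ :=
  fun k => pdd (1, 0) (famxy ψ k)
noncomputable def famq2 (ψ : ℝ × ℝ → Fin 4 → ℝ) : Fin 4 → ℝ × ℝ → ℝ :=
  fun k => pdd (0, 1) (famxy ψ k)

/- values at a point -/
noncomputable def atp (f : Fin 4 → ℝ × ℝ → ℝ) (p : ℝ × ℝ) : Fin 4 → ℝ := fun k => f k p

lemma mkq_apply (f g : Fin 4 → ℝ × ℝ → ℝ) (p : ℝ × ℝ) :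
    mkq f g p = mink (atp f p) (atp g p) := rfl

lemma mkq_comm (f g : Fin 4 → ℝ × ℝ → ℝ) (q : ℝ × ℝ) : mkq f g q = mkq g f q :=
  mk_comm _ _

section core
variable {ψ η : ℝ × ℝ → Fin 4 → ℝ}

lemma smooth_famx (hψ : ContDiff ℝ (⊤ : ℕ∞) ψ) : ∀ k, ContDiff ℝ (⊤ : ℕ∞) (famx ψ k) :=
  fun k => contDiff_pdd (contDiff_comp4 hψ k) _
lemma smooth_famy (hψ : ContDiff ℝ (⊤ : ℕ∞) ψ) : ∀ k, ContDiff ℝ (⊤ : ℕ∞) (famy ψ k) :=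
  fun k => contDiff_pdd (contDiff_comp4 hψ k) _
lemma smooth_famxy (hψ : ContDiff ℝ (⊤ : ℕ∞) ψ) : ∀ k, ContDiff ℝ (⊤ : ℕ∞) (famxy ψ k) :=
  fun k => contDiff_pdd (contDiff_pdd (contDiff_comp4 hψ k) _) _
lemma smooth_famyy (hψ : ContDiff ℝ (⊤ : ℕ∞) ψ) : ∀ k, ContDiff ℝ (⊤ : ℕ∞) (famyy ψ k) :=
  fun k => contDiff_pdd (contDiff_pdd (contDiff_comp4 hψ k) _) _
lemma smooth_comp4 (hψ : ContDiff ℝ (⊤ : ℕ∞) ψ) : ∀ k, ContDiff ℝ (⊤ : ℕ∞) (comp4 ψ k) :=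
  fun k => contDiff_comp4 hψ k

/-- Schwarz at family level : ∂₁∂₂ = ∂₂∂₁ -/
lemma schwarz1 (hψ : ContDiff ℝ (⊤ : ℕ∞) ψ) :
    (fun k => pdd (1, 0) (famy ψ k)) = famxy ψ := by
  funext k
  show pdd (1, 0) (pdd (0, 1) (comp4 ψ k)) = pdd (0, 1) (pdd (1, 0) (comp4 ψ k))
  exact pdd_comm (contDiff_comp4 hψ k) _ _

lemma schwarz2 (hψ : ContDiff ℝ (⊤ : ℕ∞) ψ) :
    (fun k => pdd (1, 0) (famyy ψ k)) = famq2 ψ := by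
  funext k
  show pdd (1, 0) (pdd (0, 1) (pdd (0, 1) (comp4 ψ k))) = pdd (0, 1) (pdd (0, 1) (pdd (1, 0) (comp4 ψ k)))
  rw [pdd_comm (contDiff_pdd (contDiff_comp4 hψ k) ((0:ℝ), (1:ℝ))) ((1:ℝ),(0:ℝ)) ((0:ℝ),(1:ℝ)),
      pdd_comm (contDiff_comp4 hψ k) ((1:ℝ),(0:ℝ)) ((0:ℝ),(1:ℝ))]

lemma pdd_add_apply {f g : ℝ × ℝ → ℝ} (hf : ContDiff ℝ (⊤ : ℕ∞) f) (hg : ContDiff ℝ (⊤ : ℕ∞) g)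
    (v p : ℝ × ℝ) :
    fderiv ℝ (fun q => f q + g q) p v = fderiv ℝ f p v + fderiv ℝ g p v := by
  rw [fderiv_fun_add (hf.differentiable (by simp) p) (hg.differentiable (by simp) p)]; rfl

lemma pd1_eq (f : ℝ × ℝ → ℝ) : pd1 f = pdd (1, 0) f := rfl
lemma pd2_eq (f : ℝ × ℝ → ℝ) : pd2 f = pdd (0, 1) f := rfl

lemma val_pd1E (hψ : ContDiff ℝ (⊤ : ℕ∞) ψ) (p : ℝ × ℝ) :
    pd1 (mkq (famx ψ) (famx ψ)) p =
      mink (atp (famxx ψ) p) (atp (famx ψ) p) + mink (atp (famx ψ) p) (atp (famxx ψ) p) := by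
  rw [pd1_eq, pdd_mkq (smooth_famx hψ) (smooth_famx hψ)]
  rfl

lemma val_pd2E (hψ : ContDiff ℝ (⊤ : ℕ∞) ψ) (p : ℝ × ℝ) :
    pd2 (mkq (famx ψ) (famx ψ)) p =
      mink (atp (famxy ψ) p) (atp (famx ψ) p) + mink (atp (famx ψ) p) (atp (famxy ψ) p) := by
  rw [pd2_eq, pdd_mkq (smooth_famx hψ) (smooth_famx hψ)]
  rfl

lemma val_pd1F (hψ : ContDiff ℝ (⊤ : ℕ∞) ψ) (p : ℝ × ℝ) :
    pd1 (mkq (famx ψ) (famy ψ)) p =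
      mink (atp (famxx ψ) p) (atp (famy ψ) p) + mink (atp (famx ψ) p) (atp (famxy ψ) p) := by
  rw [pd1_eq, pdd_mkq (smooth_famx hψ) (smooth_famy hψ)]
  show mink (atp (famxx ψ) p) (atp (famy ψ) p) +
      mink (atp (famx ψ) p) (fun k => pdd (1, 0) (famy ψ k) p) = _
  rw [show (fun k => pdd (1, 0) (famy ψ k) p) = atp (famxy ψ) p by rw [← schwarz1 hψ]; rfl]

lemma val_pd2F (hψ : ContDiff ℝ (⊤ : ℕ∞) ψ) (p : ℝ × ℝ) :
    pd2 (mkq (famx ψ) (famy ψ)) p =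
      mink (atp (famxy ψ) p) (atp (famy ψ) p) + mink (atp (famx ψ) p) (atp (famyy ψ) p) := by
  rw [pd2_eq, pdd_mkq (smooth_famx hψ) (smooth_famy hψ)]
  rfl

lemma val_pd1G (hψ : ContDiff ℝ (⊤ : ℕ∞) ψ) (p : ℝ × ℝ) :
    pd1 (mkq (famy ψ) (famy ψ)) p =
      mink (atp (famxy ψ) p) (atp (famy ψ) p) + mink (atp (famy ψ) p) (atp (famxy ψ) p) := by
  rw [pd1_eq, pdd_mkq (smooth_famy hψ) (smooth_famy hψ)]
  show mink (fun k => pdd (1, 0) (famy ψ k) p) (atp (famy ψ) p) +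
      mink (atp (famy ψ) p) (fun k => pdd (1, 0) (famy ψ k) p) = _
  rw [show (fun k => pdd (1, 0) (famy ψ k) p) = atp (famxy ψ) p by rw [← schwarz1 hψ]; rfl]

lemma val_pd2G (hψ : ContDiff ℝ (⊤ : ℕ∞) ψ) (p : ℝ × ℝ) :
    pd2 (mkq (famy ψ) (famy ψ)) p =
      mink (atp (famyy ψ) p) (atp (famy ψ) p) + mink (atp (famy ψ) p) (atp (famyy ψ) p) := by
  rw [pd2_eq, pdd_mkq (smooth_famy hψ) (smooth_famy hψ)]
  rfl

lemma fun_pd2E (hψ : ContDiff ℝ (⊤ : ℕ∞) ψ) :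
    pd2 (mkq (famx ψ) (famx ψ)) =
      fun q => mkq (famxy ψ) (famx ψ) q + mkq (famx ψ) (famxy ψ) q := by
  rw [pd2_eq, pdd_mkq (smooth_famx hψ) (smooth_famx hψ)]
  rfl

lemma fun_pd2F (hψ : ContDiff ℝ (⊤ : ℕ∞) ψ) :
    pd2 (mkq (famx ψ) (famy ψ)) =
      fun q => mkq (famxy ψ) (famy ψ) q + mkq (famx ψ) (famyy ψ) q := by
  rw [pd2_eq, pdd_mkq (smooth_famx hψ) (smooth_famy hψ)]
  rfl

lemma fun_pd1G (hψ : ContDiff ℝ (⊤ : ℕ∞) ψ) :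
    pd1 (mkq (famy ψ) (famy ψ)) =
      fun q => mkq (famxy ψ) (famy ψ) q + mkq (famy ψ) (famxy ψ) q := by
  rw [pd1_eq, pdd_mkq (smooth_famy hψ) (smooth_famy hψ), schwarz1 hψ]

lemma val_pd22E (hψ : ContDiff ℝ (⊤ : ℕ∞) ψ) (p : ℝ × ℝ) :
    pd2 (pd2 (mkq (famx ψ) (famx ψ))) p =
      (mink (atp (famq2 ψ) p) (atp (famx ψ) p) + mink (atp (famxy ψ) p) (atp (famxy ψ) p)) +
      (mink (atp (famxy ψ) p) (atp (famxy ψ) p) + mink (atp (famx ψ) p) (atp (famq2 ψ) p)) := by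
  rw [fun_pd2E hψ, pd2_eq]
  show fderiv ℝ (fun q => mkq (famxy ψ) (famx ψ) q + mkq (famx ψ) (famxy ψ) q) p (0, 1) = _
  rw [pdd_add_apply (contDiff_mkq (smooth_famxy hψ) (smooth_famx hψ))
    (contDiff_mkq (smooth_famx hψ) (smooth_famxy hψ)) _ p,
    pd_mkq (smooth_famxy hψ) (smooth_famx hψ), pd_mkq (smooth_famx hψ) (smooth_famxy hψ)]
  rfl

lemma val_pd12F (hψ : ContDiff ℝ (⊤ : ℕ∞) ψ) (p : ℝ × ℝ) :
    pd1 (pd2 (mkq (famx ψ) (famy ψ))) p =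
      (mink (atp (famq1 ψ) p) (atp (famy ψ) p) + mink (atp (famxy ψ) p) (atp (famxy ψ) p)) +
      (mink (atp (famxx ψ) p) (atp (famyy ψ) p) + mink (atp (famx ψ) p) (atp (famq2 ψ) p)) := by
  rw [fun_pd2F hψ, pd1_eq]
  show fderiv ℝ (fun q => mkq (famxy ψ) (famy ψ) q + mkq (famx ψ) (famyy ψ) q) p (1, 0) = _
  rw [pdd_add_apply (contDiff_mkq (smooth_famxy hψ) (smooth_famy hψ))
    (contDiff_mkq (smooth_famx hψ) (smooth_famyy hψ)) _ p,
    pd_mkq (smooth_famxy hψ) (smooth_famy hψ), pd_mkq (smooth_famx hψ) (smooth_famyy hψ)]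
  rw [show (fun k => pdd (1, 0) (famy ψ k) p) = atp (famxy ψ) p by rw [← schwarz1 hψ]; rfl]
  rw [show (fun k => pdd (1, 0) (famyy ψ k) p) = atp (famq2 ψ) p by rw [← schwarz2 hψ]; rfl]
  rfl

lemma val_pd11G (hψ : ContDiff ℝ (⊤ : ℕ∞) ψ) (p : ℝ × ℝ) :
    pd1 (pd1 (mkq (famy ψ) (famy ψ))) p =
      (mink (atp (famq1 ψ) p) (atp (famy ψ) p) + mink (atp (famxy ψ) p) (atp (famxy ψ) p)) +
      (mink (atp (famxy ψ) p) (atp (famxy ψ) p) + mink (atp (famy ψ) p) (atp (famq1 ψ) p)) := by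
  rw [fun_pd1G hψ, pd1_eq]
  show fderiv ℝ (fun q => mkq (famxy ψ) (famy ψ) q + mkq (famy ψ) (famxy ψ) q) p (1, 0) = _
  rw [pdd_add_apply (contDiff_mkq (smooth_famxy hψ) (smooth_famy hψ))
    (contDiff_mkq (smooth_famy hψ) (smooth_famxy hψ)) _ p,
    pd_mkq (smooth_famxy hψ) (smooth_famy hψ), pd_mkq (smooth_famy hψ) (smooth_famxy hψ)]
  rw [show (fun k => pdd (1, 0) (famy ψ k) p) = atp (famxy ψ) p by rw [← schwarz1 hψ]; rfl]
  rfl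

end core

lemma diff_zero_mkq {f g : Fin 4 → ℝ × ℝ → ℝ} (hf : ∀ k, ContDiff ℝ (⊤ : ℕ∞) (f k))
    (hg : ∀ k, ContDiff ℝ (⊤ : ℕ∞) (g k)) (h0 : ∀ q, mkq f g q = 0) (v p : ℝ × ℝ) :
    mink (fun k => pdd v (f k) p) (atp g p) + mink (atp f p) (fun k => pdd v (g k) p) = 0 :=
  congrFun ((pdd_mkq hf hg v).symm.trans (pd_const_eq h0 v)) p

set_option maxHeartbeats 2000000 in
lemma core (ψ η : ℝ × ℝ → Fin 4 → ℝ) (A : ℝ × ℝ → (ℝ × ℝ →ₗ[ℝ] ℝ × ℝ))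
    (hψ : ContDiff ℝ (⊤ : ℕ∞) ψ) (hη : ContDiff ℝ (⊤ : ℕ∞) η)
    (hcone : ∀ p, mink (ψ p) (ψ p) = 0)
    (hspace : ∀ p v, v ≠ 0 → 0 < mink (fderiv ℝ ψ p v) (fderiv ℝ ψ p v))
    (hηlight : ∀ p, mink (η p) (η p) = 0)
    (hψη : ∀ p, mink (ψ p) (η p) = 1)
    (hηnormal : ∀ p v, mink (η p) (fderiv ℝ ψ p v) = 0)
    (hWein : ∀ p v, fderiv ℝ η p v = -(fderiv ℝ ψ p (A p v)))
    (p : ℝ × ℝ) :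
    brioschi (fun q => mink (fderiv ℝ ψ q (1, 0)) (fderiv ℝ ψ q (1, 0)))
      (fun q => mink (fderiv ℝ ψ q (1, 0)) (fderiv ℝ ψ q (0, 1)))
      (fun q => mink (fderiv ℝ ψ q (0, 1)) (fderiv ℝ ψ q (0, 1))) p
    = -((A p (1, 0)).1 + (A p (0, 1)).2) := by
  have hxc := smooth_famx hψ
  have hyc := smooth_famy hψ
  have huc := smooth_comp4 hψ
  have hnc := smooth_comp4 hη
  -- rewrite the metric coefficient functions
  have hargE : (fun q => mink (fderiv ℝ ψ q (1, 0)) (fderiv ℝ ψ q (1, 0)))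
      = mkq (famx ψ) (famx ψ) := by
    funext q; rw [fderiv_comp4' hψ q (1, 0)]; rfl
  have hargF : (fun q => mink (fderiv ℝ ψ q (1, 0)) (fderiv ℝ ψ q (0, 1)))
      = mkq (famx ψ) (famy ψ) := by
    funext q; rw [fderiv_comp4' hψ q (1, 0), fderiv_comp4' hψ q (0, 1)]; rfl
  have hargG : (fun q => mink (fderiv ℝ ψ q (0, 1)) (fderiv ℝ ψ q (0, 1)))
      = mkq (famy ψ) (famy ψ) := by
    funext q; rw [fderiv_comp4' hψ q (0, 1)]; rfl
  rw [hargE, hargF, hargG]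
  -- level-1 identities
  have huu : ∀ q, mkq (fun k => comp4 ψ k) (fun k => comp4 ψ k) q = 0 := fun q => hcone q
  have hxu : ∀ q, mkq (famx ψ) (fun k => comp4 ψ k) q = 0 := by
    intro q
    have h2 : mkq (famx ψ) (fun k => comp4 ψ k) q + mkq (fun k => comp4 ψ k) (famx ψ) q = 0 :=
      congrFun ((pdd_mkq huc huc (1, 0)).symm.trans (pd_const_eq huu (1, 0))) q
    have hc := mkq_comm (fun k => comp4 ψ k) (famx ψ) q
    linarith
  have hyu : ∀ q, mkq (famy ψ) (fun k => comp4 ψ k) q = 0 := by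
    intro q
    have h2 : mkq (famy ψ) (fun k => comp4 ψ k) q + mkq (fun k => comp4 ψ k) (famy ψ) q = 0 :=
      congrFun ((pdd_mkq huc huc (0, 1)).symm.trans (pd_const_eq huu (0, 1))) q
    have hc := mkq_comm (fun k => comp4 ψ k) (famy ψ) q
    linarith
  have hnx : ∀ q, mkq (fun k => comp4 η k) (famx ψ) q = 0 := by
    intro q
    have h := hηnormal q (1, 0)
    rw [fderiv_comp4' hψ] at h
    exact h
  have hny : ∀ q, mkq (fun k => comp4 η k) (famy ψ) q = 0 := by
    intro q
    have h := hηnormal q (0, 1)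
    rw [fderiv_comp4' hψ] at h
    exact h
  -- Weingarten, componentwise
  have hwein : ∀ (q v : ℝ × ℝ) (k : Fin 4), pdd v (comp4 η k) q
      = -((A q v).1 * famx ψ k q + (A q v).2 * famy ψ k q) := by
    intro q v k
    have h1 : pdd v (comp4 η k) q = (fderiv ℝ η q v) k := (fderiv_comp4 hη q v k).symm
    rw [h1, hWein q v]
    have h2 : A q v = ((A q v).1, (A q v).2) := rfl
    rw [h2, clm2 (fderiv ℝ ψ q) _ _]
    show -(((A q v).1 • fderiv ℝ ψ q (1, 0) + (A q v).2 • fderiv ℝ ψ q (0, 1)) k) = _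
    rw [Pi.add_apply, Pi.smul_apply, Pi.smul_apply, smul_eq_mul, smul_eq_mul,
      fderiv_comp4 hψ, fderiv_comp4 hψ]
    rfl
  -- abbreviations for the vectors at p
  have hwfam : ∀ v : ℝ × ℝ, (fun k => pdd v (comp4 η k) p)
      = fun k => -((A p v).1 * atp (famx ψ) p k + (A p v).2 * atp (famy ψ) p k) :=
    fun v => funext fun k => hwein p v k
  have hexpand : ∀ (a c : ℝ) (Z : Fin 4 → ℝ),
      mink (fun k => -(a * atp (famx ψ) p k + c * atp (famy ψ) p k)) Z
      = -(a * mink (atp (famx ψ) p) Z + c * mink (atp (famy ψ) p) Z) := by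
    intro a c Z; simp [mink]; ring
  -- second-derivative pairings with the position and conormal vectors
  have hXXP : mink (atp (famxx ψ) p) (ψ p) + mink (atp (famx ψ) p) (atp (famx ψ) p) = 0 :=
    diff_zero_mkq hxc huc hxu (1, 0) p
  have hXYP : mink (atp (famxy ψ) p) (ψ p) + mink (atp (famx ψ) p) (atp (famy ψ) p) = 0 :=
    diff_zero_mkq hxc huc hxu (0, 1) p
  have hYYP : mink (atp (famyy ψ) p) (ψ p) + mink (atp (famy ψ) p) (atp (famy ψ) p) = 0 :=
    diff_zero_mkq hyc huc hyu (0, 1) p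
  have hNXX : mink (η p) (atp (famxx ψ) p)
      = (A p (1, 0)).1 * mink (atp (famx ψ) p) (atp (famx ψ) p)
        + (A p (1, 0)).2 * mink (atp (famy ψ) p) (atp (famx ψ) p) := by
    have h : mink (fun k => pdd (1, 0) (comp4 η k) p) (atp (famx ψ) p)
        + mink (η p) (atp (famxx ψ) p) = 0 := diff_zero_mkq hnc hxc hnx (1, 0) p
    rw [hwfam (1, 0), hexpand] at h
    linarith
  have hNXY2 : mink (η p) (atp (famxy ψ) p)
      = (A p (0, 1)).1 * mink (atp (famx ψ) p) (atp (famx ψ) p)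
        + (A p (0, 1)).2 * mink (atp (famy ψ) p) (atp (famx ψ) p) := by
    have h : mink (fun k => pdd (0, 1) (comp4 η k) p) (atp (famx ψ) p)
        + mink (η p) (atp (famxy ψ) p) = 0 := diff_zero_mkq hnc hxc hnx (0, 1) p
    rw [hwfam (0, 1), hexpand] at h
    linarith
  have hswY : (fun k => pdd (1, 0) (famy ψ k) p) = atp (famxy ψ) p := by
    rw [← schwarz1 hψ]; rfl
  have hNXY1 : mink (η p) (atp (famxy ψ) p)
      = (A p (1, 0)).1 * mink (atp (famx ψ) p) (atp (famy ψ) p)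
        + (A p (1, 0)).2 * mink (atp (famy ψ) p) (atp (famy ψ) p) := by
    have h : mink (fun k => pdd (1, 0) (comp4 η k) p) (atp (famy ψ) p)
        + mink (η p) (fun k => pdd (1, 0) (famy ψ k) p) = 0 := diff_zero_mkq hnc hyc hny (1, 0) p
    rw [hwfam (1, 0), hexpand, hswY] at h
    linarith
  have hNYY : mink (η p) (atp (famyy ψ) p)
      = (A p (0, 1)).1 * mink (atp (famx ψ) p) (atp (famy ψ) p)
        + (A p (0, 1)).2 * mink (atp (famy ψ) p) (atp (famy ψ) p) := by
    have h : mink (fun k => pdd (0, 1) (comp4 η k) p) (atp (famy ψ) p)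
        + mink (η p) (atp (famyy ψ) p) = 0 := diff_zero_mkq hnc hyc hny (0, 1) p
    rw [hwfam (0, 1), hexpand] at h
    linarith
  -- base pairings at p
  have hXP : mink (atp (famx ψ) p) (ψ p) = 0 := hxu p
  have hYP : mink (atp (famy ψ) p) (ψ p) = 0 := hyu p
  have hNX : mink (η p) (atp (famx ψ) p) = 0 := hnx p
  have hNY : mink (η p) (atp (famy ψ) p) = 0 := hny p
  have hXN : mink (atp (famx ψ) p) (η p) = 0 := by rw [mk_comm]; exact hNX
  have hYN : mink (atp (famy ψ) p) (η p) = 0 := by rw [mk_comm]; exact hNY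
  have hPP : mink (ψ p) (ψ p) = 0 := hcone p
  have hNN : mink (η p) (η p) = 0 := hηlight p
  have hPN : mink (ψ p) (η p) = 1 := hψη p
  -- positivity
  have hE : mink (fderiv ℝ ψ p (1, 0)) (fderiv ℝ ψ p (1, 0))
      = mink (atp (famx ψ) p) (atp (famx ψ) p) := by rw [fderiv_comp4' hψ]; rfl
  have hEpos : 0 < mink (atp (famx ψ) p) (atp (famx ψ) p) := by
    rw [← hE]; exact hspace p (1, 0) (by simp [Prod.ext_iff])
  have hEGpos : 0 < mink (atp (famx ψ) p) (atp (famx ψ) p) * mink (atp (famy ψ) p) (atp (famy ψ) p)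
      - mink (atp (famx ψ) p) (atp (famy ψ) p) ^ 2 := by
    have hw : fderiv ℝ ψ p (-(mink (atp (famx ψ) p) (atp (famy ψ) p)),
        mink (atp (famx ψ) p) (atp (famx ψ) p))
        = fun k => -(mink (atp (famx ψ) p) (atp (famy ψ) p)) * atp (famx ψ) p k
          + mink (atp (famx ψ) p) (atp (famx ψ) p) * atp (famy ψ) p k := by
      rw [clm2 (fderiv ℝ ψ p)]
      funext k
      rw [Pi.add_apply, Pi.smul_apply, Pi.smul_apply, smul_eq_mul, smul_eq_mul,
        fderiv_comp4 hψ, fderiv_comp4 hψ]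
      rfl
    have h := hspace p (-(mink (atp (famx ψ) p) (atp (famy ψ) p)),
        mink (atp (famx ψ) p) (atp (famx ψ) p))
      (by intro h0; exact (ne_of_gt hEpos) (by simpa using congrArg Prod.snd h0))
    rw [hw] at h
    have hexp2 : mink (fun k => -(mink (atp (famx ψ) p) (atp (famy ψ) p)) * atp (famx ψ) p k
          + mink (atp (famx ψ) p) (atp (famx ψ) p) * atp (famy ψ) p k)
        (fun k => -(mink (atp (famx ψ) p) (atp (famy ψ) p)) * atp (famx ψ) p k
          + mink (atp (famx ψ) p) (atp (famx ψ) p) * atp (famy ψ) p k)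
        = mink (atp (famx ψ) p) (atp (famx ψ) p) *
          (mink (atp (famx ψ) p) (atp (famx ψ) p) * mink (atp (famy ψ) p) (atp (famy ψ) p)
            - mink (atp (famx ψ) p) (atp (famy ψ) p) ^ 2) := by
      simp [mink]; ring
    rw [hexp2] at h
    nlinarith [hEpos]
  have hEGne : mink (atp (famx ψ) p) (atp (famx ψ) p) * mink (atp (famy ψ) p) (atp (famy ψ) p)
      - mink (atp (famx ψ) p) (atp (famy ψ) p) ^ 2 ≠ 0 := ne_of_gt hEGpos
  -- transform the goal
  unfold brioschi
  rw [Matrix.det_fin_three, Matrix.det_fin_three]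
  rw [val_pd22E hψ p, val_pd12F hψ p, val_pd11G hψ p, val_pd1E hψ p, val_pd2E hψ p,
    val_pd1F hψ p, val_pd2F hψ p, val_pd1G hψ p, val_pd2G hψ p]
  simp only [mkq_apply]
  -- short names
  set X := atp (famx ψ) p with hXdef
  set Y := atp (famy ψ) p with hYdef
  set XX := atp (famxx ψ) p with hXXdef
  set XY := atp (famxy ψ) p with hXYdef
  set YY := atp (famyy ψ) p with hYYdef
  set Q1 := atp (famq1 ψ) p with hQ1def
  set Q2 := atp (famq2 ψ) p with hQ2def
  set Pv := ψ p with hPvdef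
  set Nv := η p with hNvdef
  set a := (A p (1, 0)).1 with hadef
  set c := (A p (1, 0)).2 with hcdef
  set b := (A p (0, 1)).1 with hbdef
  set d := (A p (0, 1)).2 with hddef
  -- commutations
  have hYX : mink Y X = mink X Y := mk_comm _ _
  rw [hYX] at hNXX hNXY2
  have hXXN : mink XX Nv = a * mink X X + c * mink X Y := by rw [mk_comm]; exact hNXX
  have hXXPv : mink XX Pv = -mink X X := by linarith
  have hXYN1 : mink XY Nv = a * mink X Y + c * mink Y Y := by rw [mk_comm]; exact hNXY1
  have hXYN2 : mink XY Nv = b * mink X X + d * mink X Y := by rw [mk_comm]; exact hNXY2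
  have hXYN : mink XY Nv
      = ((a * mink X Y + c * mink Y Y) + (b * mink X X + d * mink X Y)) / 2 := by linarith
  have hXYPv : mink XY Pv = -mink X Y := by linarith
  have hYYN : mink YY Nv = b * mink X Y + d * mink Y Y := by rw [mk_comm]; exact hNYY
  have hYYPv : mink YY Pv = -mink Y Y := by linarith
  -- decompositions
  obtain ⟨au, bu, hdu⟩ := decomp X Y Pv Nv (mink X X) (mink X Y) (mink Y Y) rfl rfl rfl
    hXP hYP hXN hYN hPP hNN hPN hEGne XX
  rw [hXXN, hXXPv] at hdu
  obtain ⟨av, bv, hdv⟩ := decomp X Y Pv Nv (mink X X) (mink X Y) (mink Y Y) rfl rfl rfl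
    hXP hYP hXN hYN hPP hNN hPN hEGne YY
  rw [hYYN, hYYPv] at hdv
  obtain ⟨aw, bw, hdw⟩ := decomp X Y Pv Nv (mink X X) (mink X Y) (mink Y Y) rfl rfl rfl
    hXP hYP hXN hYN hPP hNN hPN hEGne XY
  rw [hXYN, hXYPv] at hdw
  -- base pairings in comm form
  have hPX : mink Pv X = 0 := by rw [mk_comm]; exact hXP
  have hPY : mink Pv Y = 0 := by rw [mk_comm]; exact hYP
  -- pairing values
  have eXXX : mink XX X = au * mink X X + bu * mink X Y := by
    rw [mk_lin _ _ _ _ _ _ _ _ _ _ hdu, hYX, hPX, hNX]; ring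
  have eXXY : mink XX Y = au * mink X Y + bu * mink Y Y := by
    rw [mk_lin _ _ _ _ _ _ _ _ _ _ hdu, hPY, hNY]; ring
  have eXYX : mink XY X = aw * mink X X + bw * mink X Y := by
    rw [mk_lin _ _ _ _ _ _ _ _ _ _ hdw, hYX, hPX, hNX]; ring
  have eXYY : mink XY Y = aw * mink X Y + bw * mink Y Y := by
    rw [mk_lin _ _ _ _ _ _ _ _ _ _ hdw, hPY, hNY]; ring
  have eYYX : mink YY X = av * mink X X + bv * mink X Y := by
    rw [mk_lin _ _ _ _ _ _ _ _ _ _ hdv, hYX, hPX, hNX]; ring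
  have eYYY : mink YY Y = av * mink X Y + bv * mink Y Y := by
    rw [mk_lin _ _ _ _ _ _ _ _ _ _ hdv, hPY, hNY]; ring
  have hXYY : mink X YY = mink YY X := mk_comm _ _
  have hYYY2 : mink Y YY = mink YY Y := mk_comm _ _
  have hPYY : mink Pv YY = -mink Y Y := by rw [mk_comm]; exact hYYPv
  have hNYY2 : mink Nv YY = (b * mink X Y + d * mink Y Y) := by rw [mk_comm]; exact hYYN
  have eXXYY : mink XX YY
      = au * (av * mink X X + bv * mink X Y) + bu * (av * mink X Y + bv * mink Y Y)
        + (a * mink X X + c * mink X Y) * (-mink Y Y)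
        + (-mink X X) * (b * mink X Y + d * mink Y Y) := by
    rw [mk_lin _ _ _ _ _ _ _ _ _ _ hdu, hXYY, hYYY2, hPYY, hNYY2, eYYX, eYYY]
  have hXXY2 : mink X XY = mink XY X := mk_comm _ _
  have hYXY2 : mink Y XY = mink XY Y := mk_comm _ _
  have hPXY : mink Pv XY = -mink X Y := by rw [mk_comm]; exact hXYPv
  have hNXY3 : mink Nv XY
      = ((a * mink X Y + c * mink Y Y) + (b * mink X X + d * mink X Y)) / 2 := by
    rw [mk_comm]; exact hXYN
  have eXYXY : mink XY XY
      = aw * (aw * mink X X + bw * mink X Y) + bw * (aw * mink X Y + bw * mink Y Y)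
        + (((a * mink X Y + c * mink Y Y) + (b * mink X X + d * mink X Y)) / 2) * (-mink X Y)
        + (-mink X Y) *
          (((a * mink X Y + c * mink Y Y) + (b * mink X X + d * mink X Y)) / 2) := by
    rw [mk_lin _ _ _ _ _ _ _ _ _ _ hdw, hXXY2, hYXY2, hPXY, hNXY3, eXYX, eXYY]
  -- commutations appearing in the goal
  have cm1 : mink X XX = mink XX X := mk_comm _ _
  have cm2 : mink X XY = mink XY X := mk_comm _ _
  have cm3 : mink X YY = mink YY X := mk_comm _ _
  have cm4 : mink Y XY = mink XY Y := mk_comm _ _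
  have cm5 : mink Y YY = mink YY Y := mk_comm _ _
  have cm6 : mink X Q2 = mink Q2 X := mk_comm _ _
  have cm7 : mink Y Q1 = mink Q1 Y := mk_comm _ _
  rw [cm1, cm2, cm3, cm4, cm5, cm6, cm7, eXXYY, eXYXY, eXXX, eXXY, eXYX, eXYY, eYYX, eYYY,
    div_eq_iff (by positivity : (mink X X * mink Y Y - mink X Y ^ 2) ^ 2 ≠ 0)]
  simp only [Matrix.of_apply, Matrix.cons_val', Matrix.cons_val_zero, Matrix.cons_val_one,
    Matrix.head_cons, Matrix.empty_val', Matrix.cons_val_fin_one, Matrix.head_fin_const,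
    Matrix.cons_val_two, Matrix.tail_cons]
  ring

noncomputable def inv2 (f : ℝ × ℝ →ₗ[ℝ] ℝ × ℝ) : ℝ × ℝ →ₗ[ℝ] ℝ × ℝ :=
  (LinearMap.det f)⁻¹ • (((f (1, 0)).1 + (f (0, 1)).2) • (LinearMap.id : ℝ × ℝ →ₗ[ℝ] ℝ × ℝ) - f)

lemma inv2_apply (f : ℝ × ℝ →ₗ[ℝ] ℝ × ℝ) (w : ℝ × ℝ) :
    inv2 f w = (LinearMap.det f)⁻¹ • (((f (1, 0)).1 + (f (0, 1)).2) • w - f w) := by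
  simp [inv2]

lemma fcoord (f : ℝ × ℝ →ₗ[ℝ] ℝ × ℝ) (w : ℝ × ℝ) :
    f w = (w.1 * (f (1, 0)).1 + w.2 * (f (0, 1)).1, w.1 * (f (1, 0)).2 + w.2 * (f (0, 1)).2) := by
  have h := lin2 f w.1 w.2
  rw [show ((w.1, w.2) : ℝ × ℝ) = w from rfl] at h
  rw [h]
  apply Prod.ext <;> simp

lemma inv2_left (f : ℝ × ℝ →ₗ[ℝ] ℝ × ℝ) (hdet : LinearMap.det f ≠ 0) (w : ℝ × ℝ) :
    f (inv2 f w) = w := by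
  have hd := det2 f
  rw [inv2_apply, _root_.map_smul, map_sub, _root_.map_smul]
  rw [show f (f w) = ((f w).1 * (f (1, 0)).1 + (f w).2 * (f (0, 1)).1,
      (f w).1 * (f (1, 0)).2 + (f w).2 * (f (0, 1)).2) from fcoord f (f w)]
  rw [show f w = (w.1 * (f (1, 0)).1 + w.2 * (f (0, 1)).1,
      w.1 * (f (1, 0)).2 + w.2 * (f (0, 1)).2) from fcoord f w]
  apply Prod.ext
  · simp only [Prod.smul_fst, Prod.fst_sub, smul_eq_mul]
    field_simp
    linear_combination (-w.1) * hd
  · simp only [Prod.smul_snd, Prod.snd_sub, smul_eq_mul]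
    field_simp
    linear_combination (-w.2) * hd

lemma inv2_trace (f : ℝ × ℝ →ₗ[ℝ] ℝ × ℝ) :
    (inv2 f (1, 0)).1 + (inv2 f (0, 1)).2
      = ((f (1, 0)).1 + (f (0, 1)).2) / LinearMap.det f := by
  rw [inv2_apply, inv2_apply]
  simp only [Prod.smul_fst, Prod.smul_snd, Prod.fst_sub, Prod.snd_sub, smul_eq_mul]
  field_simp
  ring

lemma inv2_right (f : ℝ × ℝ →ₗ[ℝ] ℝ × ℝ) (hdet : LinearMap.det f ≠ 0) (w : ℝ × ℝ) :
    inv2 f (f w) = w := by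
  have h := inv2_left f hdet w
  rw [inv2_apply, _root_.map_smul, map_sub, _root_.map_smul] at h
  rw [inv2_apply]
  exact h

lemma mk_neg_neg (u v : Fin 4 → ℝ) : mink (-u) (-v) = mink u v := by
  simp [mink]

lemma mk_neg_left (u v : Fin 4 → ℝ) : mink (-u) v = -mink u v := by
  simp [mink]; ring


/-- For a spacelike immersion `ψ` through the lightcone with non-degenerate `η`,
the Gauss curvature of the third fundamental form `III_η` (the metric induced by the
conjugate immersion `ψ̃ = -η`, which equals `⟨A_η²·,·⟩`) is `K/d`, where `K` is the Gauss
curvature of the induced metric and `d = det(A_η)` the Gauss–Kronecker curvature. -/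
theorem stmt7
    (ψ η : ℝ × ℝ → Fin 4 → ℝ)
    (A : ℝ × ℝ → (ℝ × ℝ →ₗ[ℝ] ℝ × ℝ))
    (hψ : ContDiff ℝ (⊤ : ℕ∞) ψ) (hη : ContDiff ℝ (⊤ : ℕ∞) η)
    (hcone : ∀ p, mink (ψ p) (ψ p) = 0 ∧ 0 < ψ p 0)
    (hspace : ∀ p v, v ≠ 0 → 0 < mink (fderiv ℝ ψ p v) (fderiv ℝ ψ p v))
    (hηlight : ∀ p, mink (η p) (η p) = 0)
    (hψη : ∀ p, mink (ψ p) (η p) = 1)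
    (hηnormal : ∀ p v, mink (η p) (fderiv ℝ ψ p v) = 0)
    (hWein : ∀ p v, fderiv ℝ η p v = -(fderiv ℝ ψ p (A p v)))
    (hnd : ∀ p, LinearMap.det (A p) ≠ 0) :
    ∀ p : ℝ × ℝ,
      brioschi
        (fun q => mink (fderiv ℝ (fun r => -(η r)) q (1, 0)) (fderiv ℝ (fun r => -(η r)) q (1, 0)))
        (fun q => mink (fderiv ℝ (fun r => -(η r)) q (1, 0)) (fderiv ℝ (fun r => -(η r)) q (0, 1)))
        (fun q => mink (fderiv ℝ (fun r => -(η r)) q (0, 1)) (fderiv ℝ (fun r => -(η r)) q (0, 1))) p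
      = brioschi
          (fun q => mink (fderiv ℝ ψ q (1, 0)) (fderiv ℝ ψ q (1, 0)))
          (fun q => mink (fderiv ℝ ψ q (1, 0)) (fderiv ℝ ψ q (0, 1)))
          (fun q => mink (fderiv ℝ ψ q (0, 1)) (fderiv ℝ ψ q (0, 1))) p
        / LinearMap.det (A p) := by
  intro p
  have huc := smooth_comp4 hψ
  -- tangentiality of the derivative to the light cone
  have huu : ∀ q, mkq (fun k => comp4 ψ k) (fun k => comp4 ψ k) q = 0 := fun q => (hcone q).1
  have hxu : ∀ q, mkq (famx ψ) (fun k => comp4 ψ k) q = 0 := by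
    intro q
    have h2 : mkq (famx ψ) (fun k => comp4 ψ k) q + mkq (fun k => comp4 ψ k) (famx ψ) q = 0 :=
      congrFun ((pdd_mkq huc huc (1, 0)).symm.trans (pd_const_eq huu (1, 0))) q
    have hc := mkq_comm (fun k => comp4 ψ k) (famx ψ) q
    linarith
  have hyu : ∀ q, mkq (famy ψ) (fun k => comp4 ψ k) q = 0 := by
    intro q
    have h2 : mkq (famy ψ) (fun k => comp4 ψ k) q + mkq (fun k => comp4 ψ k) (famy ψ) q = 0 :=
      congrFun ((pdd_mkq huc huc (0, 1)).symm.trans (pd_const_eq huu (0, 1))) q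
    have hc := mkq_comm (fun k => comp4 ψ k) (famy ψ) q
    linarith
  have hscal : ∀ (q w : ℝ × ℝ), mink (ψ q) (fderiv ℝ ψ q w) = 0 := by
    intro q w
    have hx0 : mink (ψ q) (fderiv ℝ ψ q (1, 0)) = 0 := by
      rw [fderiv_comp4' hψ q (1, 0)]
      have h' : mink (atp (famx ψ) q) (ψ q) = 0 := hxu q
      rw [mk_comm] at h'
      exact h'
    have hy0 : mink (ψ q) (fderiv ℝ ψ q (0, 1)) = 0 := by
      rw [fderiv_comp4' hψ q (0, 1)]
      have h' : mink (atp (famy ψ) q) (ψ q) = 0 := hyu q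
      rw [mk_comm] at h'
      exact h'
    have hw' := clm2 (fderiv ℝ ψ q) w.1 w.2
    rw [show ((w.1, w.2) : ℝ × ℝ) = w from rfl] at hw'
    rw [hw']
    have hsplit : mink (ψ q) (w.1 • fderiv ℝ ψ q (1, 0) + w.2 • fderiv ℝ ψ q (0, 1))
        = w.1 * mink (ψ q) (fderiv ℝ ψ q (1, 0)) + w.2 * mink (ψ q) (fderiv ℝ ψ q (0, 1)) := by
      simp [mink]; ring
    rw [hsplit, hx0, hy0]
    ring
  have hinj : ∀ (q v : ℝ × ℝ), v ≠ 0 → A q v ≠ 0 := by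
    intro q v hv h0
    apply hv
    have h := inv2_right (A q) (hnd q) v
    rw [h0, map_zero] at h
    exact h.symm
  have hfψ' : ∀ (q v : ℝ × ℝ), fderiv ℝ (fun r => -(η r)) q v = fderiv ℝ ψ q (A q v) := by
    intro q v
    rw [fderiv_fun_neg, ContinuousLinearMap.neg_apply, hWein q v, neg_neg]
  have core2 := core (fun r => -(η r)) (fun r => -(ψ r)) (fun q => inv2 (A q)) hη.neg hψ.neg
    (fun q => by rw [mk_neg_neg]; exact hηlight q)
    (fun q v hv => by rw [hfψ' q v]; exact hspace q (A q v) (hinj q v hv))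
    (fun q => by rw [mk_neg_neg]; exact (hcone q).1)
    (fun q => by
      rw [mk_neg_neg, mk_comm]
      exact hψη q)
    (fun q v => by
      rw [hfψ' q v, mk_neg_left, hscal q (A q v)]
      ring)
    (fun q v => by
      rw [hfψ' q (inv2 (A q) v), fderiv_fun_neg, ContinuousLinearMap.neg_apply,
        inv2_left (A q) (hnd q) v])
    p
  have core1 := core ψ η A hψ hη (fun q => (hcone q).1) hspace hηlight hψη hηnormal hWein p
  rw [core2, core1, inv2_trace (A p)]
  ring
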